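/- Let M and N be chain complexes of R-modules such that N_n lies in the subprojectivity domain of M_n for every integer n. If there exists a short exact sequence of complexes 0 → K → P → N → 0 with P a projective complex such that every chain map M[-1] → K is null-homotopic, then N lies in the subprojectivity domain of M in the category of complexes. -/

import Mathlib

open CategoryTheory CategoryTheory.Limits

universe u

/-- `N` belongs to the subprojectivity domain of `M`: every morphism `M ⟶ N` factors
through a projective object. -/
def SubprojDomain {A : Type*} [Category A] (M N : A) : Prop :=
  ∀ f : M ⟶ N, ∃ (P : A) (_ : Projective P) (a : M ⟶ P) (b : P ⟶ N), a ≫ b = f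

/-- The shift `M[-1]` of a chain complex: `M[-1]ᵢ = M_{i+1}` with differential `-d`. -/
def shiftNegOne {R : Type u} [Ring R] (M : ChainComplex (ModuleCat.{u} R) ℤ) :
    ChainComplex (ModuleCat.{u} R) ℤ where
  X i := M.X (i + 1)
  d i j := -(M.d (i + 1) (j + 1))
  shape i j h := by
    have : ¬ (ComplexShape.down ℤ).Rel (i + 1) (j + 1) := by
      simp only [ComplexShape.down_Rel] at h ⊢; omega
    try dsimp only
    rw [M.shape _ _ this, neg_zero]
  d_comp_d' i j k _ _ := by simp

/-!
Lift `f : M ⟶ N` through `p` degreewise. The lifts `t` fail to commute with the differentials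
by `d t - t d`, which is a chain map `M[-1] ⟶ P` landing in `ker p`. A null-homotopy `H` of it
into `ker p` is exactly the correction needed: `t + H` is a chain map `M ⟶ P` still lifting `f`,
so `f` factors through the projective complex `P`.
-/

theorem SubprojDomain.exists_lift {A : Type*} [Category A] {X Y P : A} (hXY : SubprojDomain X Y)
    (p : P ⟶ Y) [Epi p] (f : X ⟶ Y) : ∃ t : X ⟶ P, t ≫ p = f := by
  obtain ⟨Q, hQ, a, b, rfl⟩ := hXY f
  exact ⟨a ≫ Projective.factorThru b p, by simp⟩

namespace ChainComplex

variable {R : Type u} [Ring R] {M P N K : ChainComplex (ModuleCat.{u} R) ℤ}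

@[simps]
def chainDefect (t : ∀ n, M.X n ⟶ P.X n) : shiftNegOne M ⟶ P where
  f j := M.d (j + 1) j ≫ t j - t (j + 1) ≫ P.d (j + 1) j
  comm' := by
    rintro i j (rfl : j + 1 = i)
    simp [shiftNegOne]

theorem chainDefect_comp_eq_zero {t : ∀ n, M.X n ⟶ P.X n} {p : P ⟶ N} {f : M ⟶ N}
    (ht : ∀ n, t n ≫ p.f n = f.f n) : chainDefect t ≫ p = 0 := by
  ext j : 1
  change (M.d (j + 1) j ≫ t j - t (j + 1) ≫ P.d (j + 1) j) ≫ p.f j = 0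
  rw [Preadditive.sub_comp, Category.assoc, Category.assoc, ← p.comm, ht, ← Category.assoc, ht,
    f.comm, sub_self]

variable (t : ∀ n, M.X n ⟶ P.X n) (ι : K ⟶ P) {g : shiftNegOne M ⟶ K} (H : Homotopy g 0)

/-- `ι ∘ H` in degree `n`, read off the component of `H` at index `n - 1` of `M[-1]`. -/
def homotopyCorrection (n : ℤ) : M.X n ⟶ P.X n :=
  ((M.XIsoOfEq (sub_add_cancel n 1).symm).hom ≫ H.hom (n - 1) n) ≫ ι.f n

theorem homotopyCorrection_succ (i : ℤ) :
    homotopyCorrection ι H (i + 1) = H.hom i (i + 1) ≫ ι.f (i + 1) := by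
  suffices ∀ n (e : i + 1 = n),
      homotopyCorrection ι H n = ((M.XIsoOfEq e.symm).hom ≫ H.hom i n) ≫ ι.f n by
    exact (this _ rfl).trans (congrArg (· ≫ ι.f (i + 1)) (Category.id_comp _))
  intro n e
  obtain rfl : n - 1 = i := by omega
  rfl

theorem chainDefect_eq_homotopyCorrection (hg : g ≫ ι = chainDefect t) (j : ℤ) :
    M.d (j + 1) j ≫ t j - t (j + 1) ≫ P.d (j + 1) j =
      homotopyCorrection ι H (j + 1) ≫ P.d (j + 1) j - M.d (j + 1) j ≫ homotopyCorrection ι H j := by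
  -- with `j = k + 1` both corrections are in the shape `homotopyCorrection_succ` reads
  obtain ⟨k, rfl⟩ : ∃ k, j = k + 1 := ⟨j - 1, by omega⟩
  have hH := H.comm (k + 1)
  rw [dNext_eq H.hom (show (ComplexShape.down ℤ).Rel (k + 1) k by simp),
    prevD_eq H.hom (show (ComplexShape.down ℤ).Rel (k + 1 + 1) (k + 1) by simp),
    HomologicalComplex.zero_f, add_zero] at hH
  have hd : (shiftNegOne M).d (k + 1) k ≫ H.hom k (k + 1) ≫ ι.f (k + 1) =
      -(M.d (k + 1 + 1) (k + 1) ≫ homotopyCorrection ι H (k + 1)) := by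
    rw [homotopyCorrection_succ]
    exact Preadditive.neg_comp _ _
  rw [← chainDefect_f, ← hg, HomologicalComplex.comp_f, hH, Preadditive.add_comp, Category.assoc, hd,
    Category.assoc, ← ι.comm, ← Category.assoc, ← homotopyCorrection_succ]
  exact neg_add_eq_sub _ _

theorem homotopyCorrection_comp {p : P ⟶ N} (hιp : ι ≫ p = 0) (n : ℤ) :
    homotopyCorrection ι H n ≫ p.f n = 0 := by
  rw [homotopyCorrection, Category.assoc, ← HomologicalComplex.comp_f, hιp,
    HomologicalComplex.zero_f, comp_zero]

def correctedHom (hg : g ≫ ι = chainDefect t) : M ⟶ P where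
  f n := t n + homotopyCorrection ι H n
  comm' := by
    rintro i j (rfl : j + 1 = i)
    have hdefect := chainDefect_eq_homotopyCorrection t ι H hg j
    simp only [Preadditive.add_comp, Preadditive.comp_add]
    linear_combination (norm := abel) -hdefect

theorem correctedHom_comp (hg : g ≫ ι = chainDefect t) {p : P ⟶ N} (hιp : ι ≫ p = 0)
    {f : M ⟶ N} (ht : ∀ n, t n ≫ p.f n = f.f n) : correctedHom t ι H hg ≫ p = f := by
  ext n : 1
  simp [correctedHom, ht, homotopyCorrection_comp ι H hιp]

end ChainComplex

open ChainComplex in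
/-- if `N_n` is in the subprojectivity domain of `M_n` for all `n`, and there is
a short exact sequence `0 → K → P → N → 0` with `P` projective such that every chain map
`M[-1] → K` is null-homotopic, then `N` is in the subprojectivity domain of `M`. -/
theorem subprojDomain_of_homotopy
    {R : Type u} [Ring R] (M N : ChainComplex (ModuleCat.{u} R) ℤ)
    (hcomp : ∀ n : ℤ, SubprojDomain (M.X n) (N.X n))
    (P : ChainComplex (ModuleCat.{u} R) ℤ) (p : P ⟶ N) (hP : Projective P) (hp : Epi p)
    (h : ∀ g : shiftNegOne M ⟶ kernel p, Nonempty (Homotopy g 0)) :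
    SubprojDomain M N := by
  intro f
  choose t ht using fun n => (hcomp n).exists_lift (p.f n) (f.f n)
  obtain ⟨H⟩ := h (kernel.lift p (chainDefect t) (chainDefect_comp_eq_zero ht))
  exact ⟨P, hP, correctedHom t (kernel.ι p) H (kernel.lift_ι _ _ _), p,
    correctedHom_comp t (kernel.ι p) H _ (kernel.condition p) ht⟩
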